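/- (Weak triangular inequality for ♠.) Let v = (x₁,y₁) and w = (x₂,y₂) with y₁, y₂ > 0, and suppose the slope ratios x₁/y₁ and x₂/y₂ lie in the same interval component of one of the defining regions of ♠ (and v, w, v+w are in the domain of ♠). Then ♠(v) + ♠(w) ≥ ♠(v + w). -/
import Mathlib


/-- The defining regions of the piecewise function `♠`, as a predicate on the
ratio `t = x/y`. -/
def SpadeRegion (t : ℝ) : Prop :=
  ((11 / 2 ≤ t ∧ t < 15 / 2) ∨ (8 < t ∧ t ≤ 97 / 10)) ∨
  ((1 / 2 ≤ t ∧ t < 3) ∨ (4 < t ∧ t ≤ 11 / 2)) ∨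
  (-(1 / 4) ≤ t ∧ t ≤ 1 / 4) ∨
  ((-(11 / 2) ≤ t ∧ t < -4) ∨ (-3 < t ∧ t ≤ -(1 / 2))) ∨
  ((-(97 / 10) ≤ t ∧ t < -8) ∨ (-(15 / 2) < t ∧ t ≤ -(11 / 2))) ∨
  ((-(193 / 14) ≤ t ∧ t < -12) ∨ (-(35 / 3) < t ∧ t ≤ -(97 / 10))) ∨
  ((-(107 / 6) ≤ t ∧ t < -16) ∨ (-(63 / 4) < t ∧ t ≤ -(193 / 14))) ∨
  (∃ n : ℤ, 0 < n ∧ -(4 * (n : ℝ)) ≤ t ∧ t ≤ (1 - 4 * (n : ℝ) ^ 2) / (n : ℝ)) ∨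
  (∃ n : ℤ, 0 < n ∧ (4 * (n : ℝ) ^ 2 - 1) / (n : ℝ) ≤ t ∧ t ≤ 4 * (n : ℝ))

/-- The domain of the piecewise function `♠`: pairs `(x,y)` with `y > 0` whose
ratio `t = x/y` lies in one of the defining regions. -/
def SpadeDomain (x y : ℝ) : Prop :=
  0 < y ∧ SpadeRegion (x / y)

/-- The piecewise function `♠(x,y)`, defined according to `t = x/y`. -/
noncomputable def spade (x y : ℝ) : ℝ := by
  classical
  exact
    if (11 / 2 ≤ x / y ∧ x / y < 15 / 2) ∨ (8 < x / y ∧ x / y ≤ 97 / 10) then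
      (7 / 6) * x + (2 / 3) * y - (1 / 6) * Real.sqrt ((x + 4 * y) ^ 2 - 60 * y ^ 2)
    else if (1 / 2 ≤ x / y ∧ x / y < 3) ∨ (4 < x / y ∧ x / y ≤ 11 / 2) then
      x + 5 * y ^ 2 / (x + 2 * y)
    else if -(1 / 4) ≤ x / y ∧ x / y ≤ 1 / 4 then
      x / 2 + (1 / 2) * Real.sqrt (x ^ 2 + 20 * y ^ 2)
    else if (-(11 / 2) ≤ x / y ∧ x / y < -4) ∨ (-3 < x / y ∧ x / y ≤ -(1 / 2)) then
      5 * y ^ 2 / (2 * y - x)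
    else if (-(97 / 10) ≤ x / y ∧ x / y < -8) ∨ (-(15 / 2) < x / y ∧ x / y ≤ -(11 / 2)) then
      -x / 6 + (2 / 3) * y - (1 / 6) * Real.sqrt ((x - 4 * y) ^ 2 - 60 * y ^ 2)
    else if (-(193 / 14) ≤ x / y ∧ x / y < -12) ∨ (-(35 / 3) < x / y ∧ x / y ≤ -(97 / 10)) then
      -x / 16 + (3 / 8) * y - (1 / 16) * Real.sqrt ((x - 6 * y) ^ 2 - 160 * y ^ 2)
    else if (-(107 / 6) ≤ x / y ∧ x / y < -16) ∨ (-(63 / 4) < x / y ∧ x / y ≤ -(193 / 14)) then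
      -x / 30 + (4 / 15) * y - (1 / 30) * Real.sqrt ((x - 8 * y) ^ 2 - 300 * y ^ 2)
    else if ∃ n : ℤ, 0 < n ∧ -(4 * (n : ℝ)) ≤ x / y ∧ x / y ≤ (1 - 4 * (n : ℝ) ^ 2) / (n : ℝ) then
      -(4 * y ^ 2 / x)
    else if ∃ n : ℤ, 0 < n ∧ (4 * (n : ℝ) ^ 2 - 1) / (n : ℝ) ≤ x / y ∧ x / y ≤ 4 * (n : ℝ) then
      x + 4 * y ^ 2 / x
    else 0

section Aux
open Real

private lemma med_le {a x₁ y₁ x₂ y₂ : ℝ} (hy₁ : 0 < y₁) (hy₂ : 0 < y₂)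
    (h₁ : a ≤ x₁ / y₁) (h₂ : a ≤ x₂ / y₂) : a ≤ (x₁ + x₂) / (y₁ + y₂) := by
  rw [le_div_iff₀ hy₁] at h₁; rw [le_div_iff₀ hy₂] at h₂
  rw [le_div_iff₀ (by linarith)]; linarith

private lemma med_lt {a x₁ y₁ x₂ y₂ : ℝ} (hy₁ : 0 < y₁) (hy₂ : 0 < y₂)
    (h₁ : a < x₁ / y₁) (h₂ : a < x₂ / y₂) : a < (x₁ + x₂) / (y₁ + y₂) := by
  rw [lt_div_iff₀ hy₁] at h₁; rw [lt_div_iff₀ hy₂] at h₂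
  rw [lt_div_iff₀ (by linarith)]; linarith

private lemma med_ge {a x₁ y₁ x₂ y₂ : ℝ} (hy₁ : 0 < y₁) (hy₂ : 0 < y₂)
    (h₁ : x₁ / y₁ ≤ a) (h₂ : x₂ / y₂ ≤ a) : (x₁ + x₂) / (y₁ + y₂) ≤ a := by
  rw [div_le_iff₀ hy₁] at h₁; rw [div_le_iff₀ hy₂] at h₂
  rw [div_le_iff₀ (by linarith)]; linarith

private lemma med_gt {a x₁ y₁ x₂ y₂ : ℝ} (hy₁ : 0 < y₁) (hy₂ : 0 < y₂)
    (h₁ : x₁ / y₁ < a) (h₂ : x₂ / y₂ < a) : (x₁ + x₂) / (y₁ + y₂) < a := by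
  rw [div_lt_iff₀ hy₁] at h₁; rw [div_lt_iff₀ hy₂] at h₂
  rw [div_lt_iff₀ (by linarith)]; linarith

private lemma le_of_sq_le' {a b : ℝ} (ha : 0 ≤ a) (h : b ^ 2 ≤ a ^ 2) : b ≤ a := by
  nlinarith [sq_nonneg (a - b), sq_nonneg (a + b)]

private lemma engel {a b d₁ d₂ : ℝ} (h₁ : 0 < d₁) (h₂ : 0 < d₂) :
    (a + b) ^ 2 / (d₁ + d₂) ≤ a ^ 2 / d₁ + b ^ 2 / d₂ := by
  rw [div_add_div _ _ (ne_of_gt h₁) (ne_of_gt h₂),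
    div_le_div_iff₀ (by linarith) (by positivity)]
  nlinarith [sq_nonneg (a * d₂ - b * d₁), mul_pos h₁ h₂]

private lemma fwd_mink (c x₁ x₂ y₁ y₂ : ℝ) (hc : 0 ≤ c) :
    Real.sqrt ((x₁ + x₂) ^ 2 + c * (y₁ + y₂) ^ 2) ≤
      Real.sqrt (x₁ ^ 2 + c * y₁ ^ 2) + Real.sqrt (x₂ ^ 2 + c * y₂ ^ 2) := by
  set s₁ := Real.sqrt (x₁ ^ 2 + c * y₁ ^ 2) with hs₁
  set s₂ := Real.sqrt (x₂ ^ 2 + c * y₂ ^ 2) with hs₂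
  have h₁n : 0 ≤ s₁ := Real.sqrt_nonneg _
  have h₂n : 0 ≤ s₂ := Real.sqrt_nonneg _
  have h₁q : s₁ ^ 2 = x₁ ^ 2 + c * y₁ ^ 2 := Real.sq_sqrt (by positivity)
  have h₂q : s₂ ^ 2 = x₂ ^ 2 + c * y₂ ^ 2 := Real.sq_sqrt (by positivity)
  have key : x₁ * x₂ + c * (y₁ * y₂) ≤ s₁ * s₂ := by
    apply le_of_sq_le' (mul_nonneg h₁n h₂n)
    have e : (s₁ * s₂) ^ 2 = (x₁ ^ 2 + c * y₁ ^ 2) * (x₂ ^ 2 + c * y₂ ^ 2) := by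
      rw [mul_pow, h₁q, h₂q]
    nlinarith [sq_nonneg (x₁ * y₂ - x₂ * y₁), mul_nonneg hc (sq_nonneg (x₁ * y₂ - x₂ * y₁))]
  calc Real.sqrt ((x₁ + x₂) ^ 2 + c * (y₁ + y₂) ^ 2)
      ≤ Real.sqrt ((s₁ + s₂) ^ 2) := Real.sqrt_le_sqrt (by nlinarith)
    _ = s₁ + s₂ := Real.sqrt_sq (by positivity)

private lemma rev_mink (c u₁ u₂ y₁ y₂ : ℝ) (hc : 0 ≤ c)
    (hu₁ : 0 ≤ u₁) (hu₂ : 0 ≤ u₂) (hy₁ : 0 ≤ y₁) (hy₂ : 0 ≤ y₂)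
    (h₁ : c * y₁ ^ 2 ≤ u₁ ^ 2) (h₂ : c * y₂ ^ 2 ≤ u₂ ^ 2) :
    Real.sqrt (u₁ ^ 2 - c * y₁ ^ 2) + Real.sqrt (u₂ ^ 2 - c * y₂ ^ 2) ≤
      Real.sqrt ((u₁ + u₂) ^ 2 - c * (y₁ + y₂) ^ 2) := by
  set s₁ := Real.sqrt (u₁ ^ 2 - c * y₁ ^ 2) with hs₁
  set s₂ := Real.sqrt (u₂ ^ 2 - c * y₂ ^ 2) with hs₂
  have h₁n : 0 ≤ s₁ := Real.sqrt_nonneg _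
  have h₂n : 0 ≤ s₂ := Real.sqrt_nonneg _
  have h₁q : s₁ ^ 2 = u₁ ^ 2 - c * y₁ ^ 2 := Real.sq_sqrt (by linarith)
  have h₂q : s₂ ^ 2 = u₂ ^ 2 - c * y₂ ^ 2 := Real.sq_sqrt (by linarith)
  have hprod : c * (y₁ * y₂) ≤ u₁ * u₂ := by
    apply le_of_sq_le' (mul_nonneg hu₁ hu₂)
    have h3 : (c * y₁ ^ 2) * (c * y₂ ^ 2) ≤ u₁ ^ 2 * u₂ ^ 2 :=
      mul_le_mul h₁ h₂ (by positivity) (sq_nonneg _)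
    nlinarith [h3]
  have key : s₁ * s₂ ≤ u₁ * u₂ - c * (y₁ * y₂) := by
    apply le_of_sq_le' (by linarith)
    have e : (s₁ * s₂) ^ 2 = (u₁ ^ 2 - c * y₁ ^ 2) * (u₂ ^ 2 - c * y₂ ^ 2) := by
      rw [mul_pow, h₁q, h₂q]
    nlinarith [mul_nonneg hc (sq_nonneg (u₁ * y₂ - u₂ * y₁))]
  calc s₁ + s₂ = Real.sqrt ((s₁ + s₂) ^ 2) := (Real.sqrt_sq (by positivity)).symm
    _ ≤ _ := Real.sqrt_le_sqrt (by nlinarith)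

end Aux
section Aux2

private lemma neg_n_bounds {t : ℝ} {n : ℤ} (hn : 0 < n)
    (h₁ : -(4 * (n : ℝ)) ≤ t) (h₂ : t ≤ (1 - 4 * (n : ℝ) ^ 2) / (n : ℝ)) :
    (-4 ≤ t ∧ t ≤ -3) ∨ (-8 ≤ t ∧ t ≤ -15/2) ∨ (-12 ≤ t ∧ t ≤ -35/3) ∨
    (-16 ≤ t ∧ t ≤ -63/4) ∨ t ≤ -99/5 := by
  have hc : n = 1 ∨ n = 2 ∨ n = 3 ∨ n = 4 ∨ 5 ≤ n := by omega
  rcases hc with rfl | rfl | rfl | rfl | h5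
  · exact Or.inl ⟨by norm_num at h₁ ⊢; linarith, by norm_num at h₂ ⊢; linarith⟩
  · exact Or.inr (Or.inl ⟨by norm_num at h₁ ⊢; linarith, by norm_num at h₂ ⊢; linarith⟩)
  · exact Or.inr (Or.inr (Or.inl ⟨by norm_num at h₁ ⊢; linarith, by norm_num at h₂ ⊢; linarith⟩))
  · exact Or.inr (Or.inr (Or.inr (Or.inl ⟨by norm_num at h₁ ⊢; linarith, by norm_num at h₂ ⊢; linarith⟩)))
  · have hn5 : (5 : ℝ) ≤ (n : ℝ) := by exact_mod_cast h5
    have hpos : (0 : ℝ) < (n : ℝ) := by linarith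
    rw [le_div_iff₀ hpos] at h₂
    right; right; right; right
    nlinarith [mul_nonneg (by linarith : (0:ℝ) ≤ (n:ℝ) - 5) hpos.le]

private lemma pos_n_bounds {t : ℝ} {n : ℤ} (hn : 0 < n)
    (h₁ : (4 * (n : ℝ) ^ 2 - 1) / (n : ℝ) ≤ t) (h₂ : t ≤ 4 * (n : ℝ)) :
    (3 ≤ t ∧ t ≤ 4) ∨ (15/2 ≤ t ∧ t ≤ 8) ∨ 35/3 ≤ t := by
  have hc : n = 1 ∨ n = 2 ∨ 3 ≤ n := by omega
  rcases hc with rfl | rfl | h3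
  · exact Or.inl ⟨by norm_num at h₁ ⊢; linarith, by norm_num at h₂ ⊢; linarith⟩
  · exact Or.inr (Or.inl ⟨by norm_num at h₁ ⊢; linarith, by norm_num at h₂ ⊢; linarith⟩)
  · have hn3 : (3 : ℝ) ≤ (n : ℝ) := by exact_mod_cast h3
    have hpos : (0 : ℝ) < (n : ℝ) := by linarith
    rw [div_le_iff₀ hpos] at h₁
    right; right
    nlinarith [mul_nonneg (by linarith : (0:ℝ) ≤ (n:ℝ) - 3) hpos.le]

private lemma neg_comp_le {m : ℤ} (hm : 0 < m) :
    (1 - 4 * (m : ℝ) ^ 2) / (m : ℝ) ≤ -3 := by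
  have hm1 : (1 : ℝ) ≤ (m : ℝ) := by exact_mod_cast hm
  have hpos : (0 : ℝ) < (m : ℝ) := by linarith
  rw [div_le_iff₀ hpos]
  nlinarith [sq_nonneg ((m : ℝ) - 1)]

private lemma pos_comp_ge {m : ℤ} (hm : 0 < m) :
    (3 : ℝ) ≤ (4 * (m : ℝ) ^ 2 - 1) / (m : ℝ) := by
  have hm1 : (1 : ℝ) ≤ (m : ℝ) := by exact_mod_cast hm
  have hpos : (0 : ℝ) < (m : ℝ) := by linarith
  rw [le_div_iff₀ hpos]
  nlinarith [sq_nonneg ((m : ℝ) - 1)]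

end Aux2
section Eval

private lemma spade_eq1 {x y : ℝ}
    (h : (11 / 2 ≤ x / y ∧ x / y < 15 / 2) ∨ (8 < x / y ∧ x / y ≤ 97 / 10)) :
    spade x y = (7 / 6) * x + (2 / 3) * y - (1 / 6) * Real.sqrt ((x + 4 * y) ^ 2 - 60 * y ^ 2) := by
  rw [spade, if_pos h]

private lemma spade_eq2 {x y : ℝ} (hy : 0 < y)
    (h : (1 / 2 ≤ x / y ∧ x / y < 3) ∨ (4 < x / y ∧ x / y ≤ 11 / 2)) :
    spade x y = x + 5 * y ^ 2 / (x + 2 * y) := by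
  by_cases hc : (11 / 2 ≤ x / y ∧ x / y < 15 / 2) ∨ (8 < x / y ∧ x / y ≤ 97 / 10)
  · have ht : x / y = 11 / 2 := by
      rcases h with ⟨h1, h2⟩ | ⟨h1, h2⟩ <;> rcases hc with ⟨c1, c2⟩ | ⟨c1, c2⟩ <;> linarith
    have hx : x = 11 / 2 * y := by rw [div_eq_iff hy.ne'] at ht; linarith
    rw [spade, if_pos hc, hx]
    have e : (11 / 2 * y + 4 * y) ^ 2 - 60 * y ^ 2 = (11 / 2 * y) ^ 2 := by ring
    rw [e, Real.sqrt_sq (by linarith)]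
    have hd : 11 / 2 * y + 2 * y ≠ 0 := by positivity
    field_simp
    ring
  · rw [spade, if_neg hc, if_pos h]

private lemma spade_eq3 {x y : ℝ}
    (h : -(1 / 4) ≤ x / y ∧ x / y ≤ 1 / 4) :
    spade x y = x / 2 + (1 / 2) * Real.sqrt (x ^ 2 + 20 * y ^ 2) := by
  obtain ⟨h1, h2⟩ := h
  have n1 : ¬((11 / 2 ≤ x / y ∧ x / y < 15 / 2) ∨ (8 < x / y ∧ x / y ≤ 97 / 10)) := by
    rintro (⟨c1, c2⟩ | ⟨c1, c2⟩) <;> linarith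
  have n2 : ¬((1 / 2 ≤ x / y ∧ x / y < 3) ∨ (4 < x / y ∧ x / y ≤ 11 / 2)) := by
    rintro (⟨c1, c2⟩ | ⟨c1, c2⟩) <;> linarith
  rw [spade, if_neg n1, if_neg n2, if_pos ⟨h1, h2⟩]

private lemma spade_eq4 {x y : ℝ}
    (h : (-(11 / 2) ≤ x / y ∧ x / y < -4) ∨ (-3 < x / y ∧ x / y ≤ -(1 / 2))) :
    spade x y = 5 * y ^ 2 / (2 * y - x) := by
  obtain ⟨h1, h2⟩ : -(11 / 2) ≤ x / y ∧ x / y ≤ -(1 / 2) := by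
    rcases h with ⟨h1, h2⟩ | ⟨h1, h2⟩ <;> exact ⟨by linarith, by linarith⟩
  have n1 : ¬((11 / 2 ≤ x / y ∧ x / y < 15 / 2) ∨ (8 < x / y ∧ x / y ≤ 97 / 10)) := by
    rintro (⟨c1, c2⟩ | ⟨c1, c2⟩) <;> linarith
  have n2 : ¬((1 / 2 ≤ x / y ∧ x / y < 3) ∨ (4 < x / y ∧ x / y ≤ 11 / 2)) := by
    rintro (⟨c1, c2⟩ | ⟨c1, c2⟩) <;> linarith
  have n3 : ¬(-(1 / 4) ≤ x / y ∧ x / y ≤ 1 / 4) := by rintro ⟨c1, c2⟩; linarith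
  rw [spade, if_neg n1, if_neg n2, if_neg n3, if_pos h]

private lemma spade_eq5 {x y : ℝ} (hy : 0 < y)
    (h : (-(97 / 10) ≤ x / y ∧ x / y < -8) ∨ (-(15 / 2) < x / y ∧ x / y ≤ -(11 / 2))) :
    spade x y = -x / 6 + (2 / 3) * y - (1 / 6) * Real.sqrt ((x - 4 * y) ^ 2 - 60 * y ^ 2) := by
  obtain ⟨h1, h2⟩ : -(97 / 10) ≤ x / y ∧ x / y ≤ -(11 / 2) := by
    rcases h with ⟨h1, h2⟩ | ⟨h1, h2⟩ <;> exact ⟨by linarith, by linarith⟩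
  have n1 : ¬((11 / 2 ≤ x / y ∧ x / y < 15 / 2) ∨ (8 < x / y ∧ x / y ≤ 97 / 10)) := by
    rintro (⟨c1, c2⟩ | ⟨c1, c2⟩) <;> linarith
  have n2 : ¬((1 / 2 ≤ x / y ∧ x / y < 3) ∨ (4 < x / y ∧ x / y ≤ 11 / 2)) := by
    rintro (⟨c1, c2⟩ | ⟨c1, c2⟩) <;> linarith
  have n3 : ¬(-(1 / 4) ≤ x / y ∧ x / y ≤ 1 / 4) := by rintro ⟨c1, c2⟩; linarith
  by_cases hc : (-(11 / 2) ≤ x / y ∧ x / y < -4) ∨ (-3 < x / y ∧ x / y ≤ -(1 / 2))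
  · have ht : x / y = -(11 / 2) := by
      rcases hc with ⟨c1, c2⟩ | ⟨c1, c2⟩ <;> linarith
    have hx : x = -(11 / 2) * y := by rw [div_eq_iff hy.ne'] at ht; linarith
    rw [spade, if_neg n1, if_neg n2, if_neg n3, if_pos hc, hx]
    have e : (-(11 / 2) * y - 4 * y) ^ 2 - 60 * y ^ 2 = (11 / 2 * y) ^ 2 := by ring
    rw [e, Real.sqrt_sq (by linarith)]
    have hd : 2 * y - -(11 / 2) * y ≠ 0 := by intro h0; nlinarith
    field_simp
    ring
  · rw [spade, if_neg n1, if_neg n2, if_neg n3, if_neg hc, if_pos h]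

private lemma spade_eq6 {x y : ℝ} (hy : 0 < y)
    (h : (-(193 / 14) ≤ x / y ∧ x / y < -12) ∨ (-(35 / 3) < x / y ∧ x / y ≤ -(97 / 10))) :
    spade x y = -x / 16 + (3 / 8) * y - (1 / 16) * Real.sqrt ((x - 6 * y) ^ 2 - 160 * y ^ 2) := by
  obtain ⟨h1, h2⟩ : -(193 / 14) ≤ x / y ∧ x / y ≤ -(97 / 10) := by
    rcases h with ⟨h1, h2⟩ | ⟨h1, h2⟩ <;> exact ⟨by linarith, by linarith⟩
  have n1 : ¬((11 / 2 ≤ x / y ∧ x / y < 15 / 2) ∨ (8 < x / y ∧ x / y ≤ 97 / 10)) := by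
    rintro (⟨c1, c2⟩ | ⟨c1, c2⟩) <;> linarith
  have n2 : ¬((1 / 2 ≤ x / y ∧ x / y < 3) ∨ (4 < x / y ∧ x / y ≤ 11 / 2)) := by
    rintro (⟨c1, c2⟩ | ⟨c1, c2⟩) <;> linarith
  have n3 : ¬(-(1 / 4) ≤ x / y ∧ x / y ≤ 1 / 4) := by rintro ⟨c1, c2⟩; linarith
  have n4 : ¬((-(11 / 2) ≤ x / y ∧ x / y < -4) ∨ (-3 < x / y ∧ x / y ≤ -(1 / 2))) := by
    rintro (⟨c1, c2⟩ | ⟨c1, c2⟩) <;> linarith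
  by_cases hc : (-(97 / 10) ≤ x / y ∧ x / y < -8) ∨ (-(15 / 2) < x / y ∧ x / y ≤ -(11 / 2))
  · have ht : x / y = -(97 / 10) := by
      rcases hc with ⟨c1, c2⟩ | ⟨c1, c2⟩ <;> linarith
    have hx : x = -(97 / 10) * y := by rw [div_eq_iff hy.ne'] at ht; linarith
    rw [spade, if_neg n1, if_neg n2, if_neg n3, if_neg n4, if_pos hc, hx]
    have e1 : (-(97 / 10) * y - 4 * y) ^ 2 - 60 * y ^ 2 = (113 / 10 * y) ^ 2 := by ring
    have e2 : (-(97 / 10) * y - 6 * y) ^ 2 - 160 * y ^ 2 = (93 / 10 * y) ^ 2 := by ring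
    rw [e1, Real.sqrt_sq (by linarith), e2, Real.sqrt_sq (by linarith)]
    ring
  · rw [spade, if_neg n1, if_neg n2, if_neg n3, if_neg n4, if_neg hc, if_pos h]

private lemma spade_eq7 {x y : ℝ} (hy : 0 < y)
    (h : (-(107 / 6) ≤ x / y ∧ x / y < -16) ∨ (-(63 / 4) < x / y ∧ x / y ≤ -(193 / 14))) :
    spade x y = -x / 30 + (4 / 15) * y - (1 / 30) * Real.sqrt ((x - 8 * y) ^ 2 - 300 * y ^ 2) := by
  obtain ⟨h1, h2⟩ : -(107 / 6) ≤ x / y ∧ x / y ≤ -(193 / 14) := by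
    rcases h with ⟨h1, h2⟩ | ⟨h1, h2⟩ <;> exact ⟨by linarith, by linarith⟩
  have n1 : ¬((11 / 2 ≤ x / y ∧ x / y < 15 / 2) ∨ (8 < x / y ∧ x / y ≤ 97 / 10)) := by
    rintro (⟨c1, c2⟩ | ⟨c1, c2⟩) <;> linarith
  have n2 : ¬((1 / 2 ≤ x / y ∧ x / y < 3) ∨ (4 < x / y ∧ x / y ≤ 11 / 2)) := by
    rintro (⟨c1, c2⟩ | ⟨c1, c2⟩) <;> linarith
  have n3 : ¬(-(1 / 4) ≤ x / y ∧ x / y ≤ 1 / 4) := by rintro ⟨c1, c2⟩; linarith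
  have n4 : ¬((-(11 / 2) ≤ x / y ∧ x / y < -4) ∨ (-3 < x / y ∧ x / y ≤ -(1 / 2))) := by
    rintro (⟨c1, c2⟩ | ⟨c1, c2⟩) <;> linarith
  have n5 : ¬((-(97 / 10) ≤ x / y ∧ x / y < -8) ∨ (-(15 / 2) < x / y ∧ x / y ≤ -(11 / 2))) := by
    rintro (⟨c1, c2⟩ | ⟨c1, c2⟩) <;> linarith
  by_cases hc : (-(193 / 14) ≤ x / y ∧ x / y < -12) ∨ (-(35 / 3) < x / y ∧ x / y ≤ -(97 / 10))
  · have ht : x / y = -(193 / 14) := by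
      rcases hc with ⟨c1, c2⟩ | ⟨c1, c2⟩ <;> linarith
    have hx : x = -(193 / 14) * y := by rw [div_eq_iff hy.ne'] at ht; linarith
    rw [spade, if_neg n1, if_neg n2, if_neg n3, if_neg n4, if_neg n5, if_pos hc, hx]
    have e1 : (-(193 / 14) * y - 6 * y) ^ 2 - 160 * y ^ 2 = (213 / 14 * y) ^ 2 := by ring
    have e2 : (-(193 / 14) * y - 8 * y) ^ 2 - 300 * y ^ 2 = (185 / 14 * y) ^ 2 := by ring
    rw [e1, Real.sqrt_sq (by linarith), e2, Real.sqrt_sq (by linarith)]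
    ring
  · rw [spade, if_neg n1, if_neg n2, if_neg n3, if_neg n4, if_neg n5, if_neg hc, if_pos h]

end Eval
section Eval2

private lemma spade_eq8 {x y : ℝ} {n : ℤ} (hy : 0 < y) (hn : 0 < n)
    (h₁ : -(4 * (n : ℝ)) ≤ x / y) (h₂ : x / y ≤ (1 - 4 * (n : ℝ) ^ 2) / (n : ℝ)) :
    spade x y = -(4 * y ^ 2 / x) := by
  have hb := neg_n_bounds hn h₁ h₂
  have key : ∀ P : Prop,
      ((-4 ≤ x / y ∧ x / y ≤ -3) → P) → ((-8 ≤ x / y ∧ x / y ≤ -15/2) → P) →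
      ((-12 ≤ x / y ∧ x / y ≤ -35/3) → P) → ((-16 ≤ x / y ∧ x / y ≤ -63/4) → P) →
      (x / y ≤ -99/5 → P) → P := by
    intro P p1 p2 p3 p4 p5
    rcases hb with hb | hb | hb | hb | hb
    exacts [p1 hb, p2 hb, p3 hb, p4 hb, p5 hb]
  have n1 : ¬((11 / 2 ≤ x / y ∧ x / y < 15 / 2) ∨ (8 < x / y ∧ x / y ≤ 97 / 10)) := by
    rcases hb with ⟨b1, b2⟩ | ⟨b1, b2⟩ | ⟨b1, b2⟩ | ⟨b1, b2⟩ | b1 <;>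
      rintro (⟨c1, c2⟩ | ⟨c1, c2⟩) <;> linarith
  have n2 : ¬((1 / 2 ≤ x / y ∧ x / y < 3) ∨ (4 < x / y ∧ x / y ≤ 11 / 2)) := by
    rcases hb with ⟨b1, b2⟩ | ⟨b1, b2⟩ | ⟨b1, b2⟩ | ⟨b1, b2⟩ | b1 <;>
      rintro (⟨c1, c2⟩ | ⟨c1, c2⟩) <;> linarith
  have n3 : ¬(-(1 / 4) ≤ x / y ∧ x / y ≤ 1 / 4) := by
    rcases hb with ⟨b1, b2⟩ | ⟨b1, b2⟩ | ⟨b1, b2⟩ | ⟨b1, b2⟩ | b1 <;>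
      rintro ⟨c1, c2⟩ <;> linarith
  have n4 : ¬((-(11 / 2) ≤ x / y ∧ x / y < -4) ∨ (-3 < x / y ∧ x / y ≤ -(1 / 2))) := by
    rcases hb with ⟨b1, b2⟩ | ⟨b1, b2⟩ | ⟨b1, b2⟩ | ⟨b1, b2⟩ | b1 <;>
      rintro (⟨c1, c2⟩ | ⟨c1, c2⟩) <;> linarith
  have n5 : ¬((-(97 / 10) ≤ x / y ∧ x / y < -8) ∨ (-(15 / 2) < x / y ∧ x / y ≤ -(11 / 2))) := by
    rcases hb with ⟨b1, b2⟩ | ⟨b1, b2⟩ | ⟨b1, b2⟩ | ⟨b1, b2⟩ | b1 <;>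
      rintro (⟨c1, c2⟩ | ⟨c1, c2⟩) <;> linarith
  have n6 : ¬((-(193 / 14) ≤ x / y ∧ x / y < -12) ∨ (-(35 / 3) < x / y ∧ x / y ≤ -(97 / 10))) := by
    rcases hb with ⟨b1, b2⟩ | ⟨b1, b2⟩ | ⟨b1, b2⟩ | ⟨b1, b2⟩ | b1 <;>
      rintro (⟨c1, c2⟩ | ⟨c1, c2⟩) <;> linarith
  have n7 : ¬((-(107 / 6) ≤ x / y ∧ x / y < -16) ∨ (-(63 / 4) < x / y ∧ x / y ≤ -(193 / 14))) := by
    rcases hb with ⟨b1, b2⟩ | ⟨b1, b2⟩ | ⟨b1, b2⟩ | ⟨b1, b2⟩ | b1 <;>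
      rintro (⟨c1, c2⟩ | ⟨c1, c2⟩) <;> linarith
  rw [spade, if_neg n1, if_neg n2, if_neg n3, if_neg n4, if_neg n5, if_neg n6, if_neg n7,
    if_pos ⟨n, hn, h₁, h₂⟩]

private lemma spade_eq9 {x y : ℝ} {n : ℤ} (hy : 0 < y) (hn : 0 < n)
    (h₁ : (4 * (n : ℝ) ^ 2 - 1) / (n : ℝ) ≤ x / y) (h₂ : x / y ≤ 4 * (n : ℝ)) :
    spade x y = x + 4 * y ^ 2 / x := by
  have hb := pos_n_bounds hn h₁ h₂
  have ht3 : 3 ≤ x / y := by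
    rcases hb with ⟨b1, b2⟩ | ⟨b1, b2⟩ | b1 <;> linarith
  have n1 : ¬((11 / 2 ≤ x / y ∧ x / y < 15 / 2) ∨ (8 < x / y ∧ x / y ≤ 97 / 10)) := by
    rcases hb with ⟨b1, b2⟩ | ⟨b1, b2⟩ | b1 <;> rintro (⟨c1, c2⟩ | ⟨c1, c2⟩) <;> linarith
  have n2 : ¬((1 / 2 ≤ x / y ∧ x / y < 3) ∨ (4 < x / y ∧ x / y ≤ 11 / 2)) := by
    rcases hb with ⟨b1, b2⟩ | ⟨b1, b2⟩ | b1 <;> rintro (⟨c1, c2⟩ | ⟨c1, c2⟩) <;> linarith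
  have n3 : ¬(-(1 / 4) ≤ x / y ∧ x / y ≤ 1 / 4) := by rintro ⟨c1, c2⟩; linarith
  have n4 : ¬((-(11 / 2) ≤ x / y ∧ x / y < -4) ∨ (-3 < x / y ∧ x / y ≤ -(1 / 2))) := by
    rintro (⟨c1, c2⟩ | ⟨c1, c2⟩) <;> linarith
  have n5 : ¬((-(97 / 10) ≤ x / y ∧ x / y < -8) ∨ (-(15 / 2) < x / y ∧ x / y ≤ -(11 / 2))) := by
    rintro (⟨c1, c2⟩ | ⟨c1, c2⟩) <;> linarith
  have n6 : ¬((-(193 / 14) ≤ x / y ∧ x / y < -12) ∨ (-(35 / 3) < x / y ∧ x / y ≤ -(97 / 10))) := by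
    rintro (⟨c1, c2⟩ | ⟨c1, c2⟩) <;> linarith
  have n7 : ¬((-(107 / 6) ≤ x / y ∧ x / y < -16) ∨ (-(63 / 4) < x / y ∧ x / y ≤ -(193 / 14))) := by
    rintro (⟨c1, c2⟩ | ⟨c1, c2⟩) <;> linarith
  have n8 : ¬(∃ m : ℤ, 0 < m ∧ -(4 * (m : ℝ)) ≤ x / y ∧ x / y ≤ (1 - 4 * (m : ℝ) ^ 2) / (m : ℝ)) := by
    rintro ⟨m, hm, hma, hmb⟩
    have := neg_comp_le hm
    linarith
  rw [spade, if_neg n1, if_neg n2, if_neg n3, if_neg n4, if_neg n5, if_neg n6, if_neg n7,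
    if_neg n8, if_pos ⟨n, hn, h₁, h₂⟩]

end Eval2
section Ineq

private lemma ineq_f1 {x₁ y₁ x₂ y₂ : ℝ} (hy₁ : 0 < y₁) (hy₂ : 0 < y₂)
    (hx₁ : 11 / 2 * y₁ ≤ x₁) (hx₂ : 11 / 2 * y₂ ≤ x₂) :
    (7 / 6) * (x₁ + x₂) + (2 / 3) * (y₁ + y₂)
        - (1 / 6) * Real.sqrt ((x₁ + x₂ + 4 * (y₁ + y₂)) ^ 2 - 60 * (y₁ + y₂) ^ 2)
      ≤ ((7 / 6) * x₁ + (2 / 3) * y₁ - (1 / 6) * Real.sqrt ((x₁ + 4 * y₁) ^ 2 - 60 * y₁ ^ 2))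
        + ((7 / 6) * x₂ + (2 / 3) * y₂ - (1 / 6) * Real.sqrt ((x₂ + 4 * y₂) ^ 2 - 60 * y₂ ^ 2)) := by
  have a1 : (0:ℝ) ≤ x₁ - 11 / 2 * y₁ := by linarith
  have b1 : (0:ℝ) ≤ x₁ + 27 / 2 * y₁ := by linarith
  have a2 : (0:ℝ) ≤ x₂ - 11 / 2 * y₂ := by linarith
  have b2 : (0:ℝ) ≤ x₂ + 27 / 2 * y₂ := by linarith
  have key := rev_mink 60 (x₁ + 4 * y₁) (x₂ + 4 * y₂) y₁ y₂ (by norm_num)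
    (by linarith) (by linarith) hy₁.le hy₂.le
    (by nlinarith [mul_nonneg a1 b1, sq_nonneg y₁])
    (by nlinarith [mul_nonneg a2 b2, sq_nonneg y₂])
  have e : (x₁ + 4 * y₁ + (x₂ + 4 * y₂)) ^ 2 - 60 * (y₁ + y₂) ^ 2
      = (x₁ + x₂ + 4 * (y₁ + y₂)) ^ 2 - 60 * (y₁ + y₂) ^ 2 := by ring
  rw [e] at key
  linarith

private lemma ineq_f2 {x₁ y₁ x₂ y₂ : ℝ} (hy₁ : 0 < y₁) (hy₂ : 0 < y₂)
    (hx₁ : 1 / 2 * y₁ ≤ x₁) (hx₂ : 1 / 2 * y₂ ≤ x₂) :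
    x₁ + x₂ + 5 * (y₁ + y₂) ^ 2 / (x₁ + x₂ + 2 * (y₁ + y₂))
      ≤ (x₁ + 5 * y₁ ^ 2 / (x₁ + 2 * y₁)) + (x₂ + 5 * y₂ ^ 2 / (x₂ + 2 * y₂)) := by
  have hd₁ : 0 < x₁ + 2 * y₁ := by linarith
  have hd₂ : 0 < x₂ + 2 * y₂ := by linarith
  have key := engel (a := y₁) (b := y₂) hd₁ hd₂
  have e : (x₁ + 2 * y₁) + (x₂ + 2 * y₂) = x₁ + x₂ + 2 * (y₁ + y₂) := by ring
  rw [e] at key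
  have e1 : 5 * (y₁ + y₂) ^ 2 / (x₁ + x₂ + 2 * (y₁ + y₂))
      = 5 * ((y₁ + y₂) ^ 2 / (x₁ + x₂ + 2 * (y₁ + y₂))) := by ring
  have e2 : 5 * y₁ ^ 2 / (x₁ + 2 * y₁) = 5 * (y₁ ^ 2 / (x₁ + 2 * y₁)) := by ring
  have e3 : 5 * y₂ ^ 2 / (x₂ + 2 * y₂) = 5 * (y₂ ^ 2 / (x₂ + 2 * y₂)) := by ring
  rw [e1, e2, e3]
  linarith

private lemma ineq_f3 {x₁ y₁ x₂ y₂ : ℝ} :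
    (x₁ + x₂) / 2 + (1 / 2) * Real.sqrt ((x₁ + x₂) ^ 2 + 20 * (y₁ + y₂) ^ 2)
      ≤ (x₁ / 2 + (1 / 2) * Real.sqrt (x₁ ^ 2 + 20 * y₁ ^ 2))
        + (x₂ / 2 + (1 / 2) * Real.sqrt (x₂ ^ 2 + 20 * y₂ ^ 2)) := by
  have key := fwd_mink 20 x₁ x₂ y₁ y₂ (by norm_num)
  linarith

private lemma ineq_f4 {x₁ y₁ x₂ y₂ : ℝ} (hy₁ : 0 < y₁) (hy₂ : 0 < y₂)
    (hx₁ : x₁ ≤ -(1 / 2) * y₁) (hx₂ : x₂ ≤ -(1 / 2) * y₂) :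
    5 * (y₁ + y₂) ^ 2 / (2 * (y₁ + y₂) - (x₁ + x₂))
      ≤ 5 * y₁ ^ 2 / (2 * y₁ - x₁) + 5 * y₂ ^ 2 / (2 * y₂ - x₂) := by
  have hd₁ : 0 < 2 * y₁ - x₁ := by linarith
  have hd₂ : 0 < 2 * y₂ - x₂ := by linarith
  have key := engel (a := y₁) (b := y₂) hd₁ hd₂
  have e : (2 * y₁ - x₁) + (2 * y₂ - x₂) = 2 * (y₁ + y₂) - (x₁ + x₂) := by ring
  rw [e] at key
  have e1 : 5 * (y₁ + y₂) ^ 2 / (2 * (y₁ + y₂) - (x₁ + x₂))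
      = 5 * ((y₁ + y₂) ^ 2 / (2 * (y₁ + y₂) - (x₁ + x₂))) := by ring
  have e2 : 5 * y₁ ^ 2 / (2 * y₁ - x₁) = 5 * (y₁ ^ 2 / (2 * y₁ - x₁)) := by ring
  have e3 : 5 * y₂ ^ 2 / (2 * y₂ - x₂) = 5 * (y₂ ^ 2 / (2 * y₂ - x₂)) := by ring
  rw [e1, e2, e3]
  linarith

private lemma ineq_f5 {x₁ y₁ x₂ y₂ : ℝ} (hy₁ : 0 < y₁) (hy₂ : 0 < y₂)
    (hx₁ : x₁ ≤ -(11 / 2) * y₁) (hx₂ : x₂ ≤ -(11 / 2) * y₂) :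
    -(x₁ + x₂) / 6 + (2 / 3) * (y₁ + y₂)
        - (1 / 6) * Real.sqrt ((x₁ + x₂ - 4 * (y₁ + y₂)) ^ 2 - 60 * (y₁ + y₂) ^ 2)
      ≤ (-x₁ / 6 + (2 / 3) * y₁ - (1 / 6) * Real.sqrt ((x₁ - 4 * y₁) ^ 2 - 60 * y₁ ^ 2))
        + (-x₂ / 6 + (2 / 3) * y₂ - (1 / 6) * Real.sqrt ((x₂ - 4 * y₂) ^ 2 - 60 * y₂ ^ 2)) := by
  have a1 : (0:ℝ) ≤ (4 * y₁ - x₁) - 19 / 2 * y₁ := by linarith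
  have b1 : (0:ℝ) ≤ (4 * y₁ - x₁) + 19 / 2 * y₁ := by linarith
  have a2 : (0:ℝ) ≤ (4 * y₂ - x₂) - 19 / 2 * y₂ := by linarith
  have b2 : (0:ℝ) ≤ (4 * y₂ - x₂) + 19 / 2 * y₂ := by linarith
  have key := rev_mink 60 (4 * y₁ - x₁) (4 * y₂ - x₂) y₁ y₂ (by norm_num)
    (by linarith) (by linarith) hy₁.le hy₂.le
    (by nlinarith [mul_nonneg a1 b1, sq_nonneg y₁])
    (by nlinarith [mul_nonneg a2 b2, sq_nonneg y₂])
  have e0 : (4 * y₁ - x₁ + (4 * y₂ - x₂)) ^ 2 - 60 * (y₁ + y₂) ^ 2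
      = (x₁ + x₂ - 4 * (y₁ + y₂)) ^ 2 - 60 * (y₁ + y₂) ^ 2 := by ring
  have e1 : (4 * y₁ - x₁) ^ 2 - 60 * y₁ ^ 2 = (x₁ - 4 * y₁) ^ 2 - 60 * y₁ ^ 2 := by ring
  have e2 : (4 * y₂ - x₂) ^ 2 - 60 * y₂ ^ 2 = (x₂ - 4 * y₂) ^ 2 - 60 * y₂ ^ 2 := by ring
  rw [e0, e1, e2] at key
  linarith

private lemma ineq_f6 {x₁ y₁ x₂ y₂ : ℝ} (hy₁ : 0 < y₁) (hy₂ : 0 < y₂)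
    (hx₁ : x₁ ≤ -(97 / 10) * y₁) (hx₂ : x₂ ≤ -(97 / 10) * y₂) :
    -(x₁ + x₂) / 16 + (3 / 8) * (y₁ + y₂)
        - (1 / 16) * Real.sqrt ((x₁ + x₂ - 6 * (y₁ + y₂)) ^ 2 - 160 * (y₁ + y₂) ^ 2)
      ≤ (-x₁ / 16 + (3 / 8) * y₁ - (1 / 16) * Real.sqrt ((x₁ - 6 * y₁) ^ 2 - 160 * y₁ ^ 2))
        + (-x₂ / 16 + (3 / 8) * y₂ - (1 / 16) * Real.sqrt ((x₂ - 6 * y₂) ^ 2 - 160 * y₂ ^ 2)) := by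
  have a1 : (0:ℝ) ≤ (6 * y₁ - x₁) - 157 / 10 * y₁ := by linarith
  have b1 : (0:ℝ) ≤ (6 * y₁ - x₁) + 157 / 10 * y₁ := by linarith
  have a2 : (0:ℝ) ≤ (6 * y₂ - x₂) - 157 / 10 * y₂ := by linarith
  have b2 : (0:ℝ) ≤ (6 * y₂ - x₂) + 157 / 10 * y₂ := by linarith
  have key := rev_mink 160 (6 * y₁ - x₁) (6 * y₂ - x₂) y₁ y₂ (by norm_num)
    (by linarith) (by linarith) hy₁.le hy₂.le
    (by nlinarith [mul_nonneg a1 b1, sq_nonneg y₁])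
    (by nlinarith [mul_nonneg a2 b2, sq_nonneg y₂])
  have e0 : (6 * y₁ - x₁ + (6 * y₂ - x₂)) ^ 2 - 160 * (y₁ + y₂) ^ 2
      = (x₁ + x₂ - 6 * (y₁ + y₂)) ^ 2 - 160 * (y₁ + y₂) ^ 2 := by ring
  have e1 : (6 * y₁ - x₁) ^ 2 - 160 * y₁ ^ 2 = (x₁ - 6 * y₁) ^ 2 - 160 * y₁ ^ 2 := by ring
  have e2 : (6 * y₂ - x₂) ^ 2 - 160 * y₂ ^ 2 = (x₂ - 6 * y₂) ^ 2 - 160 * y₂ ^ 2 := by ring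
  rw [e0, e1, e2] at key
  linarith

private lemma ineq_f7 {x₁ y₁ x₂ y₂ : ℝ} (hy₁ : 0 < y₁) (hy₂ : 0 < y₂)
    (hx₁ : x₁ ≤ -(193 / 14) * y₁) (hx₂ : x₂ ≤ -(193 / 14) * y₂) :
    -(x₁ + x₂) / 30 + (4 / 15) * (y₁ + y₂)
        - (1 / 30) * Real.sqrt ((x₁ + x₂ - 8 * (y₁ + y₂)) ^ 2 - 300 * (y₁ + y₂) ^ 2)
      ≤ (-x₁ / 30 + (4 / 15) * y₁ - (1 / 30) * Real.sqrt ((x₁ - 8 * y₁) ^ 2 - 300 * y₁ ^ 2))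
        + (-x₂ / 30 + (4 / 15) * y₂ - (1 / 30) * Real.sqrt ((x₂ - 8 * y₂) ^ 2 - 300 * y₂ ^ 2)) := by
  have a1 : (0:ℝ) ≤ (8 * y₁ - x₁) - 305 / 14 * y₁ := by linarith
  have b1 : (0:ℝ) ≤ (8 * y₁ - x₁) + 305 / 14 * y₁ := by linarith
  have a2 : (0:ℝ) ≤ (8 * y₂ - x₂) - 305 / 14 * y₂ := by linarith
  have b2 : (0:ℝ) ≤ (8 * y₂ - x₂) + 305 / 14 * y₂ := by linarith
  have key := rev_mink 300 (8 * y₁ - x₁) (8 * y₂ - x₂) y₁ y₂ (by norm_num)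
    (by linarith) (by linarith) hy₁.le hy₂.le
    (by nlinarith [mul_nonneg a1 b1, sq_nonneg y₁])
    (by nlinarith [mul_nonneg a2 b2, sq_nonneg y₂])
  have e0 : (8 * y₁ - x₁ + (8 * y₂ - x₂)) ^ 2 - 300 * (y₁ + y₂) ^ 2
      = (x₁ + x₂ - 8 * (y₁ + y₂)) ^ 2 - 300 * (y₁ + y₂) ^ 2 := by ring
  have e1 : (8 * y₁ - x₁) ^ 2 - 300 * y₁ ^ 2 = (x₁ - 8 * y₁) ^ 2 - 300 * y₁ ^ 2 := by ring
  have e2 : (8 * y₂ - x₂) ^ 2 - 300 * y₂ ^ 2 = (x₂ - 8 * y₂) ^ 2 - 300 * y₂ ^ 2 := by ring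
  rw [e0, e1, e2] at key
  linarith

private lemma ineq_f8 {x₁ y₁ x₂ y₂ : ℝ} (hy₁ : 0 < y₁) (hy₂ : 0 < y₂)
    (hx₁ : x₁ ≤ -3 * y₁) (hx₂ : x₂ ≤ -3 * y₂) :
    -(4 * (y₁ + y₂) ^ 2 / (x₁ + x₂)) ≤ -(4 * y₁ ^ 2 / x₁) + -(4 * y₂ ^ 2 / x₂) := by
  have hd₁ : 0 < -x₁ := by linarith
  have hd₂ : 0 < -x₂ := by linarith
  have key := engel (a := y₁) (b := y₂) hd₁ hd₂
  have e : -x₁ + -x₂ = -(x₁ + x₂) := by ring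
  rw [e] at key
  have e1 : -(4 * (y₁ + y₂) ^ 2 / (x₁ + x₂)) = 4 * ((y₁ + y₂) ^ 2 / -(x₁ + x₂)) := by
    rw [div_neg]; ring
  have e2 : -(4 * y₁ ^ 2 / x₁) = 4 * (y₁ ^ 2 / -x₁) := by rw [div_neg]; ring
  have e3 : -(4 * y₂ ^ 2 / x₂) = 4 * (y₂ ^ 2 / -x₂) := by rw [div_neg]; ring
  rw [e1, e2, e3]
  linarith

private lemma ineq_f9 {x₁ y₁ x₂ y₂ : ℝ} (hy₁ : 0 < y₁) (hy₂ : 0 < y₂)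
    (hx₁ : 3 * y₁ ≤ x₁) (hx₂ : 3 * y₂ ≤ x₂) :
    x₁ + x₂ + 4 * (y₁ + y₂) ^ 2 / (x₁ + x₂)
      ≤ (x₁ + 4 * y₁ ^ 2 / x₁) + (x₂ + 4 * y₂ ^ 2 / x₂) := by
  have hd₁ : 0 < x₁ := by linarith
  have hd₂ : 0 < x₂ := by linarith
  have key := engel (a := y₁) (b := y₂) hd₁ hd₂
  have e1 : 4 * (y₁ + y₂) ^ 2 / (x₁ + x₂) = 4 * ((y₁ + y₂) ^ 2 / (x₁ + x₂)) := by ring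
  have e2 : 4 * y₁ ^ 2 / x₁ = 4 * (y₁ ^ 2 / x₁) := by ring
  have e3 : 4 * y₂ ^ 2 / x₂ = 4 * (y₂ ^ 2 / x₂) := by ring
  rw [e1, e2, e3]
  linarith

end Ineq
/-- Two ratios lie in the same interval component of one of the defining regions
of `♠` (the individual intervals appearing in the piecewise definition). -/
def SameComponent (t₁ t₂ : ℝ) : Prop :=
  (11 / 2 ≤ t₁ ∧ t₁ < 15 / 2 ∧ 11 / 2 ≤ t₂ ∧ t₂ < 15 / 2) ∨
  (8 < t₁ ∧ t₁ ≤ 97 / 10 ∧ 8 < t₂ ∧ t₂ ≤ 97 / 10) ∨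
  (1 / 2 ≤ t₁ ∧ t₁ < 3 ∧ 1 / 2 ≤ t₂ ∧ t₂ < 3) ∨
  (4 < t₁ ∧ t₁ ≤ 11 / 2 ∧ 4 < t₂ ∧ t₂ ≤ 11 / 2) ∨
  (-(1 / 4) ≤ t₁ ∧ t₁ ≤ 1 / 4 ∧ -(1 / 4) ≤ t₂ ∧ t₂ ≤ 1 / 4) ∨
  (-(11 / 2) ≤ t₁ ∧ t₁ < -4 ∧ -(11 / 2) ≤ t₂ ∧ t₂ < -4) ∨
  (-3 < t₁ ∧ t₁ ≤ -(1 / 2) ∧ -3 < t₂ ∧ t₂ ≤ -(1 / 2)) ∨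
  (-(97 / 10) ≤ t₁ ∧ t₁ < -8 ∧ -(97 / 10) ≤ t₂ ∧ t₂ < -8) ∨
  (-(15 / 2) < t₁ ∧ t₁ ≤ -(11 / 2) ∧ -(15 / 2) < t₂ ∧ t₂ ≤ -(11 / 2)) ∨
  (-(193 / 14) ≤ t₁ ∧ t₁ < -12 ∧ -(193 / 14) ≤ t₂ ∧ t₂ < -12) ∨
  (-(35 / 3) < t₁ ∧ t₁ ≤ -(97 / 10) ∧ -(35 / 3) < t₂ ∧ t₂ ≤ -(97 / 10)) ∨
  (-(107 / 6) ≤ t₁ ∧ t₁ < -16 ∧ -(107 / 6) ≤ t₂ ∧ t₂ < -16) ∨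
  (-(63 / 4) < t₁ ∧ t₁ ≤ -(193 / 14) ∧ -(63 / 4) < t₂ ∧ t₂ ≤ -(193 / 14)) ∨
  (∃ n : ℤ, 0 < n ∧
    (-(4 * (n : ℝ)) ≤ t₁ ∧ t₁ ≤ (1 - 4 * (n : ℝ) ^ 2) / (n : ℝ)) ∧
    (-(4 * (n : ℝ)) ≤ t₂ ∧ t₂ ≤ (1 - 4 * (n : ℝ) ^ 2) / (n : ℝ))) ∨
  (∃ n : ℤ, 0 < n ∧
    ((4 * (n : ℝ) ^ 2 - 1) / (n : ℝ) ≤ t₁ ∧ t₁ ≤ 4 * (n : ℝ)) ∧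
    ((4 * (n : ℝ) ^ 2 - 1) / (n : ℝ) ≤ t₂ ∧ t₂ ≤ 4 * (n : ℝ)))

/-- Weak triangular inequality for `♠`: if `v = (x₁,y₁)` and `w = (x₂,y₂)` have
`y₁, y₂ > 0`, their slope ratios lie in the same interval component of one of the
defining regions of `♠`, and `v`, `w`, `v+w` are in the domain of `♠`, then
`♠(v) + ♠(w) ≥ ♠(v+w)`. -/
theorem stmt13 (x₁ y₁ x₂ y₂ : ℝ) (hy₁ : 0 < y₁) (hy₂ : 0 < y₂)
    (hsame : SameComponent (x₁ / y₁) (x₂ / y₂))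
    (h1 : SpadeDomain x₁ y₁) (h2 : SpadeDomain x₂ y₂)
    (h12 : SpadeDomain (x₁ + x₂) (y₁ + y₂)) :
    spade (x₁ + x₂) (y₁ + y₂) ≤ spade x₁ y₁ + spade x₂ y₂ := by
  have hy₁₂ : 0 < y₁ + y₂ := by linarith
  rcases hsame with ⟨a1, b1, a2, b2⟩ | ⟨a1, b1, a2, b2⟩ | ⟨a1, b1, a2, b2⟩ | ⟨a1, b1, a2, b2⟩ |
    ⟨a1, b1, a2, b2⟩ | ⟨a1, b1, a2, b2⟩ | ⟨a1, b1, a2, b2⟩ | ⟨a1, b1, a2, b2⟩ |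
    ⟨a1, b1, a2, b2⟩ | ⟨a1, b1, a2, b2⟩ | ⟨a1, b1, a2, b2⟩ | ⟨a1, b1, a2, b2⟩ |
    ⟨a1, b1, a2, b2⟩ | ⟨n, hn, ⟨a1, b1⟩, ⟨a2, b2⟩⟩ | ⟨n, hn, ⟨a1, b1⟩, ⟨a2, b2⟩⟩
  · -- C1 : [11/2, 15/2)
    have a12 := med_le hy₁ hy₂ a1 a2
    have b12 := med_gt hy₁ hy₂ b1 b2
    rw [spade_eq1 (Or.inl ⟨a12, b12⟩), spade_eq1 (Or.inl ⟨a1, b1⟩), spade_eq1 (Or.inl ⟨a2, b2⟩)]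
    exact ineq_f1 hy₁ hy₂ ((le_div_iff₀ hy₁).mp a1) ((le_div_iff₀ hy₂).mp a2)
  · -- C2 : (8, 97/10]
    have a12 := med_lt hy₁ hy₂ a1 a2
    have b12 := med_ge hy₁ hy₂ b1 b2
    rw [spade_eq1 (Or.inr ⟨a12, b12⟩), spade_eq1 (Or.inr ⟨a1, b1⟩), spade_eq1 (Or.inr ⟨a2, b2⟩)]
    have c1 := (lt_div_iff₀ hy₁).mp a1
    have c2 := (lt_div_iff₀ hy₂).mp a2
    exact ineq_f1 hy₁ hy₂ (by linarith) (by linarith)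
  · -- C3 : [1/2, 3)
    have a12 := med_le hy₁ hy₂ a1 a2
    have b12 := med_gt hy₁ hy₂ b1 b2
    rw [spade_eq2 hy₁₂ (Or.inl ⟨a12, b12⟩), spade_eq2 hy₁ (Or.inl ⟨a1, b1⟩),
      spade_eq2 hy₂ (Or.inl ⟨a2, b2⟩)]
    exact ineq_f2 hy₁ hy₂ ((le_div_iff₀ hy₁).mp a1) ((le_div_iff₀ hy₂).mp a2)
  · -- C4 : (4, 11/2]
    have a12 := med_lt hy₁ hy₂ a1 a2
    have b12 := med_ge hy₁ hy₂ b1 b2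
    rw [spade_eq2 hy₁₂ (Or.inr ⟨a12, b12⟩), spade_eq2 hy₁ (Or.inr ⟨a1, b1⟩),
      spade_eq2 hy₂ (Or.inr ⟨a2, b2⟩)]
    have c1 := (lt_div_iff₀ hy₁).mp a1
    have c2 := (lt_div_iff₀ hy₂).mp a2
    exact ineq_f2 hy₁ hy₂ (by linarith) (by linarith)
  · -- C5 : [-1/4, 1/4]
    have a12 := med_le hy₁ hy₂ a1 a2
    have b12 := med_ge hy₁ hy₂ b1 b2
    rw [spade_eq3 ⟨a12, b12⟩, spade_eq3 ⟨a1, b1⟩, spade_eq3 ⟨a2, b2⟩]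
    exact ineq_f3
  · -- C6 : [-11/2, -4)
    have a12 := med_le hy₁ hy₂ a1 a2
    have b12 := med_gt hy₁ hy₂ b1 b2
    rw [spade_eq4 (Or.inl ⟨a12, b12⟩), spade_eq4 (Or.inl ⟨a1, b1⟩), spade_eq4 (Or.inl ⟨a2, b2⟩)]
    have c1 := (div_lt_iff₀ hy₁).mp b1
    have c2 := (div_lt_iff₀ hy₂).mp b2
    exact ineq_f4 hy₁ hy₂ (by linarith) (by linarith)
  · -- C7 : (-3, -1/2]
    have a12 := med_lt hy₁ hy₂ a1 a2
    have b12 := med_ge hy₁ hy₂ b1 b2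
    rw [spade_eq4 (Or.inr ⟨a12, b12⟩), spade_eq4 (Or.inr ⟨a1, b1⟩), spade_eq4 (Or.inr ⟨a2, b2⟩)]
    exact ineq_f4 hy₁ hy₂ ((div_le_iff₀ hy₁).mp b1) ((div_le_iff₀ hy₂).mp b2)
  · -- C8 : [-97/10, -8)
    have a12 := med_le hy₁ hy₂ a1 a2
    have b12 := med_gt hy₁ hy₂ b1 b2
    rw [spade_eq5 hy₁₂ (Or.inl ⟨a12, b12⟩), spade_eq5 hy₁ (Or.inl ⟨a1, b1⟩),
      spade_eq5 hy₂ (Or.inl ⟨a2, b2⟩)]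
    have c1 := (div_lt_iff₀ hy₁).mp b1
    have c2 := (div_lt_iff₀ hy₂).mp b2
    exact ineq_f5 hy₁ hy₂ (by linarith) (by linarith)
  · -- C9 : (-15/2, -11/2]
    have a12 := med_lt hy₁ hy₂ a1 a2
    have b12 := med_ge hy₁ hy₂ b1 b2
    rw [spade_eq5 hy₁₂ (Or.inr ⟨a12, b12⟩), spade_eq5 hy₁ (Or.inr ⟨a1, b1⟩),
      spade_eq5 hy₂ (Or.inr ⟨a2, b2⟩)]
    exact ineq_f5 hy₁ hy₂ ((div_le_iff₀ hy₁).mp b1) ((div_le_iff₀ hy₂).mp b2)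
  · -- C10 : [-193/14, -12)
    have a12 := med_le hy₁ hy₂ a1 a2
    have b12 := med_gt hy₁ hy₂ b1 b2
    rw [spade_eq6 hy₁₂ (Or.inl ⟨a12, b12⟩), spade_eq6 hy₁ (Or.inl ⟨a1, b1⟩),
      spade_eq6 hy₂ (Or.inl ⟨a2, b2⟩)]
    have c1 := (div_lt_iff₀ hy₁).mp b1
    have c2 := (div_lt_iff₀ hy₂).mp b2
    exact ineq_f6 hy₁ hy₂ (by linarith) (by linarith)
  · -- C11 : (-35/3, -97/10]
    have a12 := med_lt hy₁ hy₂ a1 a2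
    have b12 := med_ge hy₁ hy₂ b1 b2
    rw [spade_eq6 hy₁₂ (Or.inr ⟨a12, b12⟩), spade_eq6 hy₁ (Or.inr ⟨a1, b1⟩),
      spade_eq6 hy₂ (Or.inr ⟨a2, b2⟩)]
    exact ineq_f6 hy₁ hy₂ ((div_le_iff₀ hy₁).mp b1) ((div_le_iff₀ hy₂).mp b2)
  · -- C12 : [-107/6, -16)
    have a12 := med_le hy₁ hy₂ a1 a2
    have b12 := med_gt hy₁ hy₂ b1 b2
    rw [spade_eq7 hy₁₂ (Or.inl ⟨a12, b12⟩), spade_eq7 hy₁ (Or.inl ⟨a1, b1⟩),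
      spade_eq7 hy₂ (Or.inl ⟨a2, b2⟩)]
    have c1 := (div_lt_iff₀ hy₁).mp b1
    have c2 := (div_lt_iff₀ hy₂).mp b2
    exact ineq_f7 hy₁ hy₂ (by linarith) (by linarith)
  · -- C13 : (-63/4, -193/14]
    have a12 := med_lt hy₁ hy₂ a1 a2
    have b12 := med_ge hy₁ hy₂ b1 b2
    rw [spade_eq7 hy₁₂ (Or.inr ⟨a12, b12⟩), spade_eq7 hy₁ (Or.inr ⟨a1, b1⟩),
      spade_eq7 hy₂ (Or.inr ⟨a2, b2⟩)]
    exact ineq_f7 hy₁ hy₂ ((div_le_iff₀ hy₁).mp b1) ((div_le_iff₀ hy₂).mp b2)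
  · -- C14 : [-4n, (1-4n²)/n]
    have a12 := med_le hy₁ hy₂ a1 a2
    have b12 := med_ge hy₁ hy₂ b1 b2
    rw [spade_eq8 hy₁₂ hn a12 b12, spade_eq8 hy₁ hn a1 b1, spade_eq8 hy₂ hn a2 b2]
    have hcl := neg_comp_le hn
    have c1 := (div_le_iff₀ hy₁).mp (le_trans b1 hcl)
    have c2 := (div_le_iff₀ hy₂).mp (le_trans b2 hcl)
    exact ineq_f8 hy₁ hy₂ (by linarith) (by linarith)
  · -- C15 : [(4n²-1)/n, 4n]
    have a12 := med_le hy₁ hy₂ a1 a2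
    have b12 := med_ge hy₁ hy₂ b1 b2
    rw [spade_eq9 hy₁₂ hn a12 b12, spade_eq9 hy₁ hn a1 b1, spade_eq9 hy₂ hn a2 b2]
    have hcg := pos_comp_ge hn
    have c1 := (le_div_iff₀ hy₁).mp (le_trans hcg a1)
    have c2 := (le_div_iff₀ hy₂).mp (le_trans hcg a2)
    exact ineq_f9 hy₁ hy₂ (by linarith) (by linarith)
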